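/- arXiv:0804.0986 — 4 statements merged into one kernel-verified Lean document; each statement's English description precedes it below -/
import Mathlib

section
/- Let △abc be a geodesic triangle on the sphere S_r, with side length A = d_r(b,c) opposite the vertex a. Let b′ be the midpoint of the minimal geodesic arc from a to b, and c′ the midpoint of the minimal geodesic arc from a to c. Then the geodesic distance between the midpoints satisfies d_r(b′, c′) > A/2. -/
/-! On `S_r` the geodesic distance is `r` times the angle at the origin, and the midpoint of the
arc `pq` is a positive multiple of `p + q`. The claim thus becomes `∠(a + b, a + c) > ∠(b, c) / 2`.
As `cos (∠(b, c) / 2) = ‖b + c‖ / (2r)`, this is `2r ⟪a + b, a + c⟫ < ‖a + b‖ ‖a + c‖ ‖b + c‖`,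
and the difference of the squares of the two sides is four times the Gram determinant of
`a, b, c`, which is positive by linear independence. -/

noncomputable section

/-- Points of ℝ³. -/
abbrev E3 := EuclideanSpace ℝ (Fin 3)

/-- Points of the Euclidean plane. -/
abbrev E2 := EuclideanSpace ℝ (Fin 2)

/-- `p` lies on the sphere `S_r` of radius `r` centered at the origin in ℝ³. -/
def onSphere (r : ℝ) (p : E3) : Prop := ‖p‖ = r

/-- Geodesic (great-circle) distance on the sphere of radius `r`:
`d_r(p,q) = r · arccos(⟪p,q⟫ / r²)`. -/
def sdist (r : ℝ) (p q : E3) : ℝ := r * Real.arccos ((inner ℝ p q : ℝ) / r ^ 2)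

/-- The tangent vector at `p` pointing along the minimal geodesic arc from `p`
towards `q` (the component of `q` orthogonal to `p`). -/
def sTangent (p q : E3) : E3 := q - (((inner ℝ q p : ℝ)) / ‖p‖ ^ 2) • p

/-- The spherical angle at vertex `v` between the minimal geodesic arcs `vp` and `vq`,
i.e. the angle between the tangent directions of the two arcs at `v`; it lies in `[0, π]`. -/
def sAngle (p v q : E3) : ℝ :=
  InnerProductGeometry.angle (sTangent v p) (sTangent v q)

/-- A geodesic triangle on the sphere of radius `r`: three vertices on the sphere,
pairwise neither equal nor antipodal, and not all lying on one great circle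
(equivalently, linearly independent in ℝ³). -/
def SphTriangle (r : ℝ) (a b c : E3) : Prop :=
  onSphere r a ∧ onSphere r b ∧ onSphere r c ∧
  a ≠ b ∧ a ≠ c ∧ b ≠ c ∧ a ≠ -b ∧ a ≠ -c ∧ b ≠ -c ∧
  LinearIndependent ℝ ![a, b, c]

/-- `m` is the midpoint of the minimal geodesic arc from `p` to `q` on the sphere of
radius `r`: it lies on the sphere and on the arc (distances to the endpoints add up to
the distance between the endpoints) and is equidistant from the two endpoints. -/
def IsSphMidpoint (r : ℝ) (p q m : E3) : Prop :=
  onSphere r m ∧ sdist r p m = sdist r m q ∧ sdist r p m + sdist r m q = sdist r p q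

open InnerProductGeometry Real
open scoped RealInnerProductSpace

section InnerProductSpace

variable {V : Type*} [NormedAddCommGroup V] [InnerProductSpace ℝ V]

lemma gram_det_pos_of_linearIndependent {a b c : V} (h : LinearIndependent ℝ ![a, b, c]) :
    0 < ‖a‖ ^ 2 * ‖b‖ ^ 2 * ‖c‖ ^ 2 + 2 * ⟪a, b⟫ * ⟪a, c⟫ * ⟪b, c⟫
      - ‖a‖ ^ 2 * ⟪b, c⟫ ^ 2 - ‖b‖ ^ 2 * ⟪a, c⟫ ^ 2 - ‖c‖ ^ 2 * ⟪a, b⟫ ^ 2 := by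
  have hdet := (Matrix.posDef_gram_of_linearIndependent h).det_pos
  rw [Matrix.det_fin_three] at hdet
  simp only [Matrix.gram_apply, Matrix.cons_val_zero, Matrix.cons_val_one, Matrix.cons_val_two,
    Matrix.head_cons, Matrix.tail_cons, real_inner_self_eq_norm_sq, real_inner_comm a b,
    real_inner_comm a c, real_inner_comm b c] at hdet
  linarith

lemma two_mul_norm_mul_cos_half_angle {p q : V} (h : ‖q‖ = ‖p‖) :
    2 * ‖p‖ * cos (angle p q / 2) = ‖p + q‖ := by
  have hcos : 0 ≤ cos (angle p q / 2) :=
    cos_nonneg_of_mem_Icc ⟨by linarith [angle_nonneg p q, pi_pos], by linarith [angle_le_pi p q]⟩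
  refine (pow_left_inj₀ (by positivity) (norm_nonneg _) two_ne_zero).1 ?_
  rw [norm_add_sq_real, ← cos_angle_mul_norm_mul_norm, h, mul_pow, cos_sq,
    mul_div_cancel₀ _ two_ne_zero]
  ring

lemma exists_pos_smul_add_of_angle_eq_half {p q m : V} (hq : ‖q‖ = ‖p‖) (hm : ‖m‖ = ‖p‖)
    (hpq : p + q ≠ 0) (hpm : angle p m = angle p q / 2) (hmq : angle m q = angle p q / 2) :
    ∃ t : ℝ, 0 < t ∧ m = t • (p + q) := by
  have hp : p ≠ 0 := by
    rintro rfl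
    exact hpq (by rwa [norm_zero, norm_eq_zero, ← zero_add q] at hq)
  have hinner : ⟪m, p + q⟫ = ‖m‖ * ‖p + q‖ := by
    rw [inner_add_right, ← two_mul_norm_mul_cos_half_angle hq, ← cos_angle_mul_norm_mul_norm m p,
      ← cos_angle_mul_norm_mul_norm m q, angle_comm m p, hpm, hmq, hm, hq]
    ring
  refine ⟨‖m‖ / ‖p + q‖, div_pos (hm ▸ norm_pos_iff.2 hp) (norm_pos_iff.2 hpq), ?_⟩
  rw [div_eq_inv_mul, mul_smul, ← inner_eq_norm_mul_iff_real.1 hinner, smul_smul,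
    inv_mul_cancel₀ (norm_ne_zero_iff.2 hpq), one_smul]

lemma half_angle_lt_angle_add_add {a b c : V} (hb : ‖b‖ = ‖a‖) (hc : ‖c‖ = ‖a‖)
    (h : LinearIndependent ℝ ![a, b, c]) : angle b c / 2 < angle (a + b) (a + c) := by
  have hG := gram_det_pos_of_linearIndependent h
  rw [hb, hc] at hG
  have hsq : (2 * ‖a‖ * ⟪a + b, a + c⟫) ^ 2 < (‖a + b‖ * ‖a + c‖ * ‖b + c‖) ^ 2 := by
    simp only [mul_pow]
    rw [norm_add_sq_real, norm_add_sq_real, norm_add_sq_real, inner_add_left,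
      inner_add_right, inner_add_right, real_inner_self_eq_norm_sq, real_inner_comm a b, hb, hc]
    linear_combination 4 * hG
  have hlt := lt_of_pow_lt_pow_left₀ 2 (by positivity) hsq
  have hcos : cos (angle (a + b) (a + c)) < cos (angle b c / 2) := by
    refine lt_of_mul_lt_mul_left (a := 2 * ‖a‖ * (‖a + b‖ * ‖a + c‖)) ?_ (by positivity)
    calc 2 * ‖a‖ * (‖a + b‖ * ‖a + c‖) * cos (angle (a + b) (a + c))
        = 2 * ‖a‖ * ⟪a + b, a + c⟫ := by rw [← cos_angle_mul_norm_mul_norm]; ring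
      _ < ‖a + b‖ * ‖a + c‖ * ‖b + c‖ := hlt
      _ = 2 * ‖a‖ * (‖a + b‖ * ‖a + c‖) * cos (angle b c / 2) := by
        rw [← two_mul_norm_mul_cos_half_angle (hc.trans hb.symm), hb]; ring
  refine lt_of_not_ge fun hle => hcos.not_ge ?_
  exact cos_le_cos_of_nonneg_of_le_pi (angle_nonneg _ _)
    (by linarith [angle_le_pi b c, pi_pos]) hle

end InnerProductSpace

lemma sdist_eq_mul_angle {r : ℝ} {p q : E3} (hp : onSphere r p) (hq : onSphere r q) :
    sdist r p q = r * angle p q := by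
  unfold onSphere at hp hq
  rw [sdist, angle, hp, hq, sq]

lemma IsSphMidpoint.exists_pos_smul_add {r : ℝ} (hr : 0 < r) {p q m : E3} (hp : onSphere r p)
    (hq : onSphere r q) (hpq : p ≠ -q) (hm : IsSphMidpoint r p q m) :
    ∃ t : ℝ, 0 < t ∧ m = t • (p + q) := by
  obtain ⟨hm, heq, hsum⟩ := hm
  rw [sdist_eq_mul_angle hp hm, sdist_eq_mul_angle hm hq] at heq
  rw [sdist_eq_mul_angle hp hm, sdist_eq_mul_angle hm hq, sdist_eq_mul_angle hp hq,
    ← mul_add] at hsum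
  have heq := mul_left_cancel₀ hr.ne' heq
  have hsum := mul_left_cancel₀ hr.ne' hsum
  exact exists_pos_smul_add_of_angle_eq_half (hq.trans hp.symm) (hm.trans hp.symm)
    (fun h => hpq (eq_neg_of_add_eq_zero_left h)) (by linarith) (by linarith)

/-- **The midchord lemma** (Lemma 2).  Let `△abc` be a geodesic triangle on the sphere
`S_r` with side length `A = d_r(b,c)` opposite `a`.  If `b'` and `c'` are the midpoints
of the minimal geodesic arcs `ab` and `ac` respectively, then `d_r(b',c') > A / 2`.
(In the plane the midchord would have length exactly `A / 2`.) -/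
theorem spherical_midchord_long (r : ℝ) (hr : 0 < r) (a b c b' c' : E3)
    (htri : SphTriangle r a b c)
    (hb' : IsSphMidpoint r a b b') (hc' : IsSphMidpoint r a c c') :
    sdist r b' c' > sdist r b c / 2 := by
  obtain ⟨ha, hb, hc, -, -, -, hab, hac, -, hli⟩ := htri
  obtain ⟨s, hs, rfl⟩ := hb'.exists_pos_smul_add hr ha hb hab
  obtain ⟨t, ht, rfl⟩ := hc'.exists_pos_smul_add hr ha hc hac
  rw [gt_iff_lt, sdist_eq_mul_angle hb'.1 hc'.1, sdist_eq_mul_angle hb hc,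
    angle_smul_left_of_pos _ _ hs, angle_smul_right_of_pos _ _ ht, mul_div_assoc]
  exact mul_lt_mul_of_pos_left (half_angle_lt_angle_add_add (hb.trans ha.symm)
    (hc.trans ha.symm) hli) hr
end
end

section
/- Let △abc be a geodesic triangle on the sphere S_r with side lengths A = d_r(b,c), B = d_r(a,c), C = d_r(a,b). Define a sequence of geodesic triangles with common apex a as follows: T₀ = △abc, and for i ≥ 1, Tᵢ is the triangle whose vertices are a together with the midpoints of the two sides of Tᵢ₋₁ incident to a (so the two sides of Tᵢ at a have lengths B/2ⁱ and C/2ⁱ); let sᵢ denote the length of the third side of Tᵢ (the i-th midchord). Then the sequence i ↦ 2ⁱ·sᵢ (with s₀ = A) is strictly increasing; in particular sᵢ > A/2ⁱ for every i ≥ 1. -/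
noncomputable section

/-!
Write `b₀ = cos β • a + (r sin β) • v` and `c₀ = cos γ • a + (r sin γ) • w` with unit tangent
vectors `v, w ⊥ a`. Bisecting an arc from `a` halves its angle and keeps the great circle, so
`b i`, `c i` sit at angles `β / 2 ^ i`, `γ / 2 ^ i` on the same circles, and by the spherical law
of cosines `s i = r arccos (cos βᵢ cos γᵢ + k sin βᵢ sin γᵢ)` with `k = ⟪v, w⟫`; the triangle is
nondegenerate exactly when `|k| < 1`. Each step of the sequence is then the inequality
`arccos X(2u, 2v) < 2 arccos X(u, v)`, which follows from the half-angle formula: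
`cos² (arccos X(2u, 2v) / 2) - X(u, v)² = (1 - k²) sin² u sin² v > 0`.
-/

open Real Set
open scoped RealInnerProductSpace

lemma cos_mul_cos_add_mul_sin_mul_sin_mem_Icc {k : ℝ} (hk : |k| ≤ 1) (θ σ : ℝ) :
    cos θ * cos σ + k * sin θ * sin σ ∈ Icc (-1) 1 := by
  -- a convex combination of `cos (θ - σ)` and `cos (θ + σ)`
  have h : cos θ * cos σ + k * sin θ * sin σ
      = (1 + k) / 2 * cos (θ - σ) + (1 - k) / 2 * cos (θ + σ) := by
    rw [cos_sub, cos_add]; ring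
  obtain ⟨hk₁, hk₂⟩ := abs_le.mp hk
  rw [h]
  constructor <;> nlinarith [neg_one_le_cos (θ - σ), cos_le_one (θ - σ),
    neg_one_le_cos (θ + σ), cos_le_one (θ + σ)]

lemma arccos_two_mul_lt_two_mul_arccos {k u v : ℝ} (hk : |k| < 1)
    (hu : sin u ≠ 0) (hv : sin v ≠ 0) :
    arccos (cos (2 * u) * cos (2 * v) + k * sin (2 * u) * sin (2 * v))
      < 2 * arccos (cos u * cos v + k * sin u * sin v) := by
  set x := cos (2 * u) * cos (2 * v) + k * sin (2 * u) * sin (2 * v)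
  set y := cos u * cos v + k * sin u * sin v
  obtain ⟨hx₁, hx₂⟩ := cos_mul_cos_add_mul_sin_mul_sin_mem_Icc hk.le (2 * u) (2 * v)
  obtain ⟨hy₁, -⟩ := cos_mul_cos_add_mul_sin_mul_sin_mem_Icc hk.le u v
  set φ := arccos x / 2 with hφ
  have hφ₀ : 0 ≤ φ := by have := arccos_nonneg x; positivity
  have hφπ : φ ≤ π / 2 := by have := arccos_le_pi x; linarith
  have hgap : cos φ ^ 2 - y ^ 2 = (1 - k ^ 2) * sin u ^ 2 * sin v ^ 2 := by
    rw [cos_sq, show 2 * φ = arccos x by ring, cos_arccos hx₁ hx₂]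
    simp only [y, cos_two_mul, sin_two_mul]
    linear_combination (-(1 - cos u ^ 2)) * sin_sq_add_cos_sq v - sin v ^ 2 * sin_sq_add_cos_sq u
  have hk₂ : 0 < 1 - k ^ 2 := by nlinarith [abs_nonneg k, sq_abs k]
  have hy : y < cos φ := (le_abs_self y).trans_lt <| abs_lt_of_sq_lt_sq
    (by nlinarith [mul_pos (mul_pos hk₂ (pow_two_pos_of_ne_zero hu)) (pow_two_pos_of_ne_zero hv)])
    (cos_nonneg_of_mem_Icc ⟨by linarith [pi_pos], hφπ⟩)
  have := arccos_lt_arccos hy₁ hy (cos_le_one φ)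
  rw [arccos_cos hφ₀ (by linarith [pi_pos])] at this
  linarith

lemma div_two_pow_mem_Ioo {β : ℝ} (hβ : β ∈ Ioo 0 π) (i : ℕ) : β / 2 ^ i ∈ Ioo 0 π :=
  ⟨by have := hβ.1; positivity, (div_le_self hβ.1.le (one_le_pow₀ one_le_two)).trans_lt hβ.2⟩

lemma strictMono_two_pow_mul_arccos {k β γ : ℝ} (hk : |k| < 1) (hβ : β ∈ Ioo 0 π)
    (hγ : γ ∈ Ioo 0 π) :
    StrictMono fun i : ℕ => (2 : ℝ) ^ i *
      arccos (cos (β / 2 ^ i) * cos (γ / 2 ^ i) + k * sin (β / 2 ^ i) * sin (γ / 2 ^ i)) := by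
  refine strictMono_nat_of_lt_succ fun i => ?_
  have hhalf : ∀ α : ℝ, α / 2 ^ i = 2 * (α / 2 ^ (i + 1)) := fun α => by
    rw [pow_succ]; field_simp
  have hsin : ∀ α ∈ Ioo 0 π, sin (α / 2 ^ (i + 1)) ≠ 0 := fun α hα =>
    (sin_pos_of_mem_Ioo (div_two_pow_mem_Ioo hα _)).ne'
  have key := mul_lt_mul_of_pos_left
    (arccos_two_mul_lt_two_mul_arccos hk (hsin β hβ) (hsin γ hγ)) (pow_pos two_pos i)
  rw [← hhalf, ← hhalf] at key
  exact key.trans_eq (by ring)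

section GreatCircle

variable {F : Type*} [NormedAddCommGroup F] [InnerProductSpace ℝ F] {r : ℝ} {a v w : F}

/-- The point at arc length `r * θ` from `a` along the great circle of the sphere of radius
`r = ‖a‖` whose tangent direction at `a` is the unit vector `v ⊥ a`. -/
def greatCircle (r : ℝ) (a v : F) (θ : ℝ) : F := cos θ • a + (r * sin θ) • v

lemma greatCircle_zero : greatCircle r a v 0 = a := by simp [greatCircle]

lemma inner_greatCircle_greatCircle (ha : ‖a‖ = r) (hav : ⟪a, v⟫ = 0) (haw : ⟪a, w⟫ = 0)
    (θ σ : ℝ) :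
    ⟪greatCircle r a v θ, greatCircle r a w σ⟫
      = r ^ 2 * (cos θ * cos σ + ⟪v, w⟫ * sin θ * sin σ) := by
  rw [real_inner_comm] at hav
  simp only [greatCircle, inner_add_left, inner_add_right, real_inner_smul_left,
    real_inner_smul_right, real_inner_self_eq_norm_sq, ha, hav, haw]
  ring

lemma norm_greatCircle (hr : 0 ≤ r) (ha : ‖a‖ = r) (hv : ‖v‖ = 1) (hav : ⟪a, v⟫ = 0)
    (θ : ℝ) : ‖greatCircle r a v θ‖ = r := by
  have h := inner_greatCircle_greatCircle ha hav hav θ θ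
  rw [real_inner_self_eq_norm_sq, real_inner_self_eq_norm_sq, hv] at h
  have : ‖greatCircle r a v θ‖ ^ 2 = r ^ 2 := by
    rw [h]; linear_combination r ^ 2 * cos_sq_add_sin_sq θ
  exact (pow_left_inj₀ (norm_nonneg _) hr two_ne_zero).mp this

lemma add_greatCircle (θ : ℝ) :
    a + greatCircle r a v θ = (2 * cos (θ / 2)) • greatCircle r a v (θ / 2) := by
  have hcos : cos θ = 2 * cos (θ / 2) ^ 2 - 1 := by
    rw [← cos_two_mul, mul_div_cancel₀ _ two_ne_zero]
  have hsin : sin θ = 2 * sin (θ / 2) * cos (θ / 2) := by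
    rw [← sin_two_mul, mul_div_cancel₀ _ two_ne_zero]
  rw [greatCircle, greatCircle, hcos, hsin]
  module

lemma exists_eq_greatCircle {p : F} (hr : 0 < r) (ha : ‖a‖ = r) (hp : ‖p‖ = r)
    (h₁ : a ≠ p) (h₂ : a ≠ -p) :
    ∃ v : F, ‖v‖ = 1 ∧ ⟪a, v⟫ = 0 ∧ ∃ β ∈ Ioo 0 π, p = greatCircle r a v β := by
  set t := ⟪a, p⟫ / r ^ 2
  set q := p - t • a with hq_def
  have hr2 : r ^ 2 ≠ 0 := by positivity
  have haq : ⟪a, q⟫ = 0 := by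
    rw [hq_def, inner_sub_right, real_inner_smul_right, real_inner_self_eq_norm_sq, ha]
    simp only [t, div_mul_cancel₀ _ hr2, sub_self]
  have hq_sq : ‖q‖ ^ 2 = r ^ 2 * (1 - t ^ 2) := by
    have hpyth : ‖p‖ ^ 2 = ‖t • a‖ ^ 2 + ‖q‖ ^ 2 := by
      rw [show p = t • a + q by simp [q], norm_add_sq_real, real_inner_smul_left, haq]; ring
    rw [norm_smul, hp, ha, Real.norm_eq_abs, mul_pow, sq_abs] at hpyth
    linarith
  have hq : q ≠ 0 := by
    intro h
    have hpa : p = t • a := sub_eq_zero.mp h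
    have ht : |t| = 1 := by
      have := congrArg norm hpa
      rw [norm_smul, hp, ha, Real.norm_eq_abs] at this
      field_simp at this; linarith
    rcases (abs_eq zero_le_one).mp ht with h1 | h1
    · exact h₁ (by rw [hpa, h1, one_smul])
    · exact h₂ (by rw [hpa, h1, neg_one_smul, neg_neg])
  have ht : t ^ 2 < 1 := by
    have : 0 < ‖q‖ ^ 2 := by positivity
    nlinarith
  obtain ⟨ht₁, ht₂⟩ := abs_lt.mp
    (abs_lt_of_sq_lt_sq (by rwa [one_pow]) zero_le_one : |t| < 1)
  have hsin : r * sin (arccos t) = ‖q‖ := by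
    rw [sin_arccos, ← sqrt_sq hr.le, ← sqrt_mul (sq_nonneg r), ← hq_sq, sqrt_sq (norm_nonneg q)]
  refine ⟨‖q‖⁻¹ • q, norm_smul_inv_norm hq, by rw [real_inner_smul_right, haq, mul_zero],
    arccos t, ⟨arccos_pos.2 ht₂, arccos_lt_pi.2 ht₁⟩, ?_⟩
  rw [greatCircle, cos_arccos ht₁.le ht₂.le, hsin, smul_smul,
    mul_inv_cancel₀ (norm_ne_zero_iff.2 hq), one_smul, hq_def, add_sub_cancel]

lemma abs_inner_lt_one_of_linearIndependent {β γ : ℝ} (hv : ‖v‖ = 1) (hw : ‖w‖ = 1)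
    (hβ : sin β ≠ 0)
    (hli : LinearIndependent ℝ ![a, greatCircle r a v β, greatCircle r a w γ]) :
    |⟪v, w⟫| < 1 := by
  refine (abs_real_inner_le_norm v w).trans_eq (by rw [hv, hw, one_mul]) |>.lt_of_ne fun h => ?_
  obtain ⟨-, s, -, rfl⟩ := (abs_real_inner_div_norm_mul_norm_eq_one_iff v w).mp
    (by rw [hv, hw, mul_one, div_one, h])
  -- with `w = s • v` all three points lie in the plane spanned by `a` and `v`
  have hdep : ∑ i, ![-(sin β * cos γ - s * sin γ * cos β), -(s * sin γ), sin β] i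
      • ![a, greatCircle r a v β, greatCircle r a (s • v) γ] i = 0 := by
    simp only [Fin.sum_univ_three, Matrix.cons_val_zero, Matrix.cons_val_one, Matrix.cons_val_two,
      Matrix.head_cons, Matrix.tail_cons, greatCircle]
    module
  exact hβ (Fintype.linearIndependent_iff.mp hli _ hdep 2)

end GreatCircle

section Sphere

variable {r : ℝ} {a v w : E3}

lemma inner_eq_sq_mul_cos_sdist {p q : E3} (hr : 0 < r) (hp : ‖p‖ = r) (hq : ‖q‖ = r) :
    ⟪p, q⟫ = r ^ 2 * cos (sdist r p q / r) := by
  have hr2 : 0 < r ^ 2 := by positivity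
  have hcs := abs_real_inner_le_norm p q
  rw [hp, hq, ← sq] at hcs
  obtain ⟨h₁, h₂⟩ := abs_le.mp hcs
  rw [sdist, mul_div_cancel_left₀ _ hr.ne',
    cos_arccos (by rw [le_div_iff₀ hr2]; linarith) (by rwa [div_le_one hr2]),
    mul_div_cancel₀ _ hr2.ne']

lemma sdist_greatCircle_greatCircle (hr : 0 < r) (ha : ‖a‖ = r) (hav : ⟪a, v⟫ = 0)
    (haw : ⟪a, w⟫ = 0) (θ σ : ℝ) :
    sdist r (greatCircle r a v θ) (greatCircle r a w σ)
      = r * arccos (cos θ * cos σ + ⟪v, w⟫ * sin θ * sin σ) := by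
  rw [sdist, inner_greatCircle_greatCircle ha hav haw, mul_div_cancel_left₀ _ (by positivity)]

lemma sdist_greatCircle (hr : 0 < r) (ha : ‖a‖ = r) (hav : ⟪a, v⟫ = 0) {θ : ℝ}
    (hθ : θ ∈ Icc 0 π) : sdist r a (greatCircle r a v θ) = r * θ := by
  have h := sdist_greatCircle_greatCircle hr ha hav hav 0 θ
  rwa [greatCircle_zero, cos_zero, sin_zero, one_mul, mul_zero, zero_mul, add_zero,
    arccos_cos hθ.1 hθ.2] at h

lemma IsSphMidpoint.eq_greatCircle_half {m : E3} {θ : ℝ} (hr : 0 < r) (ha : ‖a‖ = r)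
    (hv : ‖v‖ = 1) (hav : ⟪a, v⟫ = 0) (hθ : θ ∈ Ioo 0 π)
    (hm : IsSphMidpoint r a (greatCircle r a v θ) m) :
    m = greatCircle r a v (θ / 2) := by
  obtain ⟨hm, hsym, hsum⟩ := hm
  set p := greatCircle r a v θ
  have hm : ‖m‖ = r := hm
  have hp : ‖p‖ = r := norm_greatCircle hr.le ha hv hav θ
  have hmid : ‖greatCircle r a v (θ / 2)‖ = r := norm_greatCircle hr.le ha hv hav (θ / 2)
  have hap : sdist r a p = r * θ := sdist_greatCircle hr ha hav (Ioo_subset_Icc_self hθ)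
  have ham : ⟪a, m⟫ = r ^ 2 * cos (θ / 2) := by
    rw [inner_eq_sq_mul_cos_sdist hr ha hm, show sdist r a m = r * (θ / 2) by linarith,
      mul_div_cancel_left₀ _ hr.ne']
  have hmp : ⟪m, p⟫ = r ^ 2 * cos (θ / 2) := by
    rw [inner_eq_sq_mul_cos_sdist hr hm hp, show sdist r m p = r * (θ / 2) by linarith,
      mul_div_cancel_left₀ _ hr.ne']
  have hcos : 0 < cos (θ / 2) :=
    cos_pos_of_mem_Ioo ⟨by linarith [hθ.1, pi_pos], by linarith [hθ.2]⟩
  -- `a + p` is a positive multiple of the candidate midpoint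
  have hinner : ⟪m, greatCircle r a v (θ / 2)⟫ = ‖m‖ * ‖greatCircle r a v (θ / 2)‖ := by
    have h := congrArg (⟪m, ·⟫) (add_greatCircle (r := r) (a := a) (v := v) θ)
    simp only [inner_add_right, real_inner_smul_right, real_inner_comm a m, ham] at h
    rw [hm, hmid]
    nlinarith
  have h := inner_eq_norm_mul_iff_real.mp hinner
  rw [hm, hmid] at h
  exact smul_right_injective E3 hr.ne' h

lemma eq_greatCircle_div_two_pow {β : ℝ} {b : ℕ → E3} (hr : 0 < r) (ha : ‖a‖ = r)
    (hv : ‖v‖ = 1) (hav : ⟪a, v⟫ = 0) (hβ : β ∈ Ioo 0 π) (h₀ : b 0 = greatCircle r a v β)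
    (hb : ∀ i, IsSphMidpoint r a (b i) (b (i + 1))) (i : ℕ) :
    b i = greatCircle r a v (β / 2 ^ i) := by
  induction i with
  | zero => simpa using h₀
  | succ i ih =>
    have hmid := hb i
    rw [ih] at hmid
    rw [hmid.eq_greatCircle_half hr ha hv hav (div_two_pow_mem_Ioo hβ i), div_div, ← pow_succ]

end Sphere

/-- **The iterated midchord claim** (used in the proof of Lemma 3).
Start from a geodesic triangle `T₀ = △ a (b 0) (c 0)` on the sphere `S_r`, and
repeatedly bisect the two sides at the apex `a`: `b (i+1)` and `c (i+1)` are the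
midpoints of the arcs from `a` to `b i` and to `c i` respectively, and
`s i = d_r(b i, c i)` is the `i`-th midchord (`s 0 = A`).  Then the sequence
`i ↦ 2^i * s i` is strictly increasing; in particular `s i > A / 2^i` for `i ≥ 1`. -/
theorem spherical_iterated_midchords (r : ℝ) (hr : 0 < r) (a : E3) (b c : ℕ → E3)
    (htri : SphTriangle r a (b 0) (c 0))
    (hb : ∀ i, IsSphMidpoint r a (b i) (b (i + 1)))
    (hc : ∀ i, IsSphMidpoint r a (c i) (c (i + 1))) :
    StrictMono (fun i : ℕ => (2 : ℝ) ^ i * sdist r (b i) (c i)) ∧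
    ∀ i : ℕ, 1 ≤ i → sdist r (b i) (c i) > sdist r (b 0) (c 0) / 2 ^ i := by
  obtain ⟨ha, hb₀, hc₀, hab, hac, -, hab', hac', -, hli⟩ := htri
  obtain ⟨v, hv, hav, β, hβ, hbβ⟩ := exists_eq_greatCircle hr ha hb₀ hab hab'
  obtain ⟨w, hw, haw, γ, hγ, hcγ⟩ := exists_eq_greatCircle hr ha hc₀ hac hac'
  have hk : |⟪v, w⟫| < 1 := abs_inner_lt_one_of_linearIndependent hv hw
    (sin_pos_of_mem_Ioo hβ).ne' (by rwa [hbβ, hcγ] at hli)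
  have hs : ∀ i, sdist r (b i) (c i) = r * arccos (cos (β / 2 ^ i) * cos (γ / 2 ^ i)
      + ⟪v, w⟫ * sin (β / 2 ^ i) * sin (γ / 2 ^ i)) := fun i => by
    rw [eq_greatCircle_div_two_pow hr ha hv hav hβ hbβ hb,
      eq_greatCircle_div_two_pow hr ha hw haw hγ hcγ hc,
      sdist_greatCircle_greatCircle hr ha hav haw]
  have hmono : StrictMono fun i : ℕ => (2 : ℝ) ^ i * sdist r (b i) (c i) := by
    simp only [hs, mul_left_comm _ r]
    exact (strictMono_two_pow_mul_arccos hk hβ hγ).const_mul hr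
  refine ⟨hmono, fun i hi => ?_⟩
  have h := hmono (Nat.lt_of_lt_of_le zero_lt_one hi)
  dsimp only at h
  rw [pow_zero, one_mul] at h
  rw [gt_iff_lt, div_lt_iff₀ (by positivity), mul_comm]
  exact h
end
end

section
/- Let A, B, C be positive real numbers satisfying the strict triangle inequality, with each less than πr and A + B + C < 2πr, so that there exist both a planar triangle and a geodesic triangle on the sphere S_r with side lengths A, B, C. Then each angle of the spherical triangle is strictly greater than the angle of the planar triangle opposite the side of the same length. Equivalently: when a planar triangle is drawn on a sphere with the same side lengths, all three angles strictly increase, and when a spherical triangle is drawn in the plane with the same side lengths, all three angles strictly decrease. -/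
noncomputable section

/-!
Work with the angular side lengths `α = A / r`, `β = B / r`, `γ = C / r`. By the spherical and the
planar law of cosines, the cosines of the angles opposite `A` are
`(cos α - cos β cos γ) / (sin β sin γ)` and `(β² + γ² - α²) / (2 β γ)`. With
`u = (α - β + γ) / 2` and `v = (α + β - γ) / 2` these are `1 - 2 sin u sin v / (sin β sin γ)` and
`1 - 2 u v / (β γ)`; since `u < γ`, `v < β` and `sin x / x` is strictly decreasing on `(0, π]`,
the spherical cosine is the smaller one, so the spherical angle is the larger.

For existence, the spherical triangle is built from two sides `β`, `γ` enclosing the angle whose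
cosine is the spherical expression above; that expression lies in `(-1, 1)` because of the triangle
inequalities and `α + β + γ < 2π`.
-/

open Real InnerProductGeometry EuclideanGeometry
open scoped RealInnerProductSpace

lemma sin_div_lt_sin_div {x y : ℝ} (hx : 0 < x) (hxy : x < y) (hy : y ≤ π) :
    sin y / y < sin x / x := by
  simpa using strictConcaveOn_sin_Icc.secant_strict_mono (a := 0) ⟨le_rfl, pi_pos.le⟩
    ⟨hx.le, (hxy.trans_le hy).le⟩ ⟨(hx.trans hxy).le, hy⟩ hx.ne' (hx.trans hxy).ne' hxy

lemma abs_sq_add_sq_sub_sq_lt {a b c : ℝ} (ha : 0 < a) (hb : 0 < b) (hc : 0 < c)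
    (habc : a < b + c) (hbac : b < a + c) (hcab : c < a + b) :
    |b ^ 2 + c ^ 2 - a ^ 2| < 2 * b * c := by
  rw [abs_lt]
  constructor
  · nlinarith [mul_pos (by linarith : 0 < b + c - a) (by linarith : 0 < a + b + c)]
  · nlinarith [mul_pos (by linarith : 0 < a - b + c) (by linarith : 0 < a + b - c)]

lemma cos_sub_cos_mul_cos_div_lt {α β γ : ℝ} (hβ : 0 < β) (hγ : 0 < γ) (hβπ : β < π)
    (hγπ : γ < π) (hαβγ : α < β + γ) (hβαγ : β < α + γ) (hγαβ : γ < α + β) :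
    (cos α - cos β * cos γ) / (sin β * sin γ) < (β ^ 2 + γ ^ 2 - α ^ 2) / (2 * β * γ) := by
  obtain ⟨u, hu_def⟩ : ∃ u, u = (α - β + γ) / 2 := ⟨_, rfl⟩
  obtain ⟨v, hv_def⟩ : ∃ v, v = (α + β - γ) / 2 := ⟨_, rfl⟩
  have hu : 0 < u := by linarith
  have hv : 0 < v := by linarith
  have hsβ : 0 < sin β := sin_pos_of_pos_of_lt_pi hβ hβπ
  have hsγ : 0 < sin γ := sin_pos_of_pos_of_lt_pi hγ hγπ
  have hsu : u * sin γ < γ * sin u := by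
    have := sin_div_lt_sin_div hu (by linarith) hγπ.le
    rwa [div_lt_div_iff₀ hγ hu, mul_comm, mul_comm (sin u)] at this
  have hsv : v * sin β < β * sin v := by
    have := sin_div_lt_sin_div hv (by linarith) hβπ.le
    rwa [div_lt_div_iff₀ hβ hv, mul_comm, mul_comm (sin v)] at this
  have half_angle : cos α - cos β * cos γ = sin β * sin γ - 2 * sin u * sin v := by
    have h := cos_sub_cos (β - γ) α
    rw [cos_sub, show (β - γ + α) / 2 = v by linarith, show (β - γ - α) / 2 = -u by linarith,
      sin_neg] at h
    linarith
  have hplanar : β ^ 2 + γ ^ 2 - α ^ 2 = 2 * β * γ - 4 * u * v := by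
    rw [hu_def, hv_def]; ring
  rw [div_lt_div_iff₀ (by positivity) (by positivity), half_angle, hplanar]
  nlinarith [mul_lt_mul'' hsu hsv (by positivity) (by positivity)]

lemma neg_one_lt_cos_sub_cos_mul_cos_div {α β γ : ℝ} (hα : 0 < α) (hβ : 0 < β) (hγ : 0 < γ)
    (hβπ : β < π) (hγπ : γ < π) (hαβγ : α < β + γ) (hsum : α + β + γ < 2 * π) :
    -1 < (cos α - cos β * cos γ) / (sin β * sin γ) := by
  have hsβ : 0 < sin β := sin_pos_of_pos_of_lt_pi hβ hβπ
  have hsγ : 0 < sin γ := sin_pos_of_pos_of_lt_pi hγ hγπ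
  have half_angle : cos α - cos β * cos γ + sin β * sin γ
      = 2 * sin ((α + β + γ) / 2) * sin ((β + γ - α) / 2) := by
    have h := cos_sub_cos α (β + γ)
    rw [cos_add, show (α - (β + γ)) / 2 = -((β + γ - α) / 2) by ring, sin_neg] at h
    rw [show (α + β + γ) / 2 = (α + (β + γ)) / 2 by ring]
    linarith
  have hpos : 0 < sin ((α + β + γ) / 2) * sin ((β + γ - α) / 2) :=
    mul_pos (sin_pos_of_pos_of_lt_pi (by linarith) (by linarith))
      (sin_pos_of_pos_of_lt_pi (by linarith) (by linarith))
  rw [lt_div_iff₀ (by positivity)]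
  linarith

section InnerProductSpace

variable {V : Type*} [NormedAddCommGroup V] [InnerProductSpace ℝ V]

lemma norm_eq_of_real_inner_self_eq {r : ℝ} {v : V} (hr : 0 ≤ r) (h : ⟪v, v⟫ = r ^ 2) :
    ‖v‖ = r := by
  rwa [real_inner_self_eq_norm_sq, sq_eq_sq₀ (norm_nonneg v) hr] at h

lemma norm_sub_cos_smul {r θ : ℝ} {a b : V} (ha : ‖a‖ = r) (hb : ‖b‖ = r)
    (h : ⟪a, b⟫ = r ^ 2 * cos θ) (hr : 0 ≤ r) (hθ : 0 ≤ sin θ) :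
    ‖b - cos θ • a‖ = r * sin θ := by
  rw [← sq_eq_sq₀ (norm_nonneg _) (by positivity), ← real_inner_self_eq_norm_sq]
  simp only [inner_sub_left, inner_sub_right, real_inner_smul_left, real_inner_smul_right]
  rw [real_inner_comm a b, h, real_inner_self_eq_norm_sq, real_inner_self_eq_norm_sq, ha, hb]
  linear_combination -r ^ 2 * sin_sq_add_cos_sq θ

lemma real_inner_sub_cos_smul_sub_cos_smul {r α β γ : ℝ} {a b c : V} (ha : ‖a‖ = r)
    (hab : ⟪a, b⟫ = r ^ 2 * cos γ) (hac : ⟪a, c⟫ = r ^ 2 * cos β)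
    (hbc : ⟪b, c⟫ = r ^ 2 * cos α) :
    ⟪b - cos γ • a, c - cos β • a⟫ = r ^ 2 * (cos α - cos β * cos γ) := by
  simp only [inner_sub_left, inner_sub_right, real_inner_smul_left, real_inner_smul_right]
  rw [real_inner_comm a b, hab, hac, hbc, real_inner_self_eq_norm_sq, ha]
  ring

end InnerProductSpace

lemma sdist_comm (r : ℝ) (p q : E3) : sdist r p q = sdist r q p := by
  rw [sdist, sdist, real_inner_comm]

lemma real_inner_eq_sq_mul_cos_sdist_div {r : ℝ} (hr : 0 < r) {a b : E3} (ha : ‖a‖ = r)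
    (hb : ‖b‖ = r) : ⟪a, b⟫ = r ^ 2 * cos (sdist r a b / r) := by
  have hbound : |⟪a, b⟫ / r ^ 2| ≤ 1 := by
    rw [abs_div, abs_of_pos (pow_pos hr 2), div_le_one (pow_pos hr 2), sq]
    simpa only [ha, hb] using abs_real_inner_le_norm a b
  rw [sdist, mul_div_cancel_left₀ _ hr.ne', cos_arccos (abs_le.1 hbound).1 (abs_le.1 hbound).2]
  field_simp

lemma sdist_eq_of_real_inner_eq {r θ : ℝ} (hr : r ≠ 0) {a b : E3}
    (h : ⟪a, b⟫ = r ^ 2 * cos θ) (hθ : 0 ≤ θ) (hθπ : θ ≤ π) : sdist r a b = r * θ := by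
  rw [sdist, h, mul_div_cancel_left₀ _ (pow_ne_zero 2 hr), arccos_cos hθ hθπ]

lemma sTangent_eq_sub_cos_smul {r θ : ℝ} (hr : r ≠ 0) {a b : E3} (ha : ‖a‖ = r)
    (h : ⟪a, b⟫ = r ^ 2 * cos θ) : sTangent a b = b - cos θ • a := by
  rw [sTangent, real_inner_comm, h, ha, mul_div_cancel_left₀ _ (pow_ne_zero 2 hr)]

theorem cos_sAngle {r α β γ : ℝ} (hr : 0 < r) {a b c : E3} (ha : ‖a‖ = r) (hb : ‖b‖ = r)
    (hc : ‖c‖ = r) (hβ : 0 < sin β) (hγ : 0 < sin γ) (hab : ⟪a, b⟫ = r ^ 2 * cos γ)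
    (hac : ⟪a, c⟫ = r ^ 2 * cos β) (hbc : ⟪b, c⟫ = r ^ 2 * cos α) :
    cos (sAngle b a c) = (cos α - cos β * cos γ) / (sin β * sin γ) := by
  rw [sAngle, sTangent_eq_sub_cos_smul hr.ne' ha hab, sTangent_eq_sub_cos_smul hr.ne' ha hac,
    cos_angle, real_inner_sub_cos_smul_sub_cos_smul ha hab hac hbc,
    norm_sub_cos_smul ha hb hab hr.le hγ.le, norm_sub_cos_smul ha hc hac hr.le hβ.le]
  field_simp

section EuclideanGeometry

variable {V P : Type*} [NormedAddCommGroup V] [InnerProductSpace ℝ V] [MetricSpace P]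
  [NormedAddTorsor V P]

lemma cos_angle_eq_of_dist {A B C : ℝ} {p q s : P} (hB : B ≠ 0) (hC : C ≠ 0)
    (hqs : dist q s = A) (hps : dist p s = B) (hpq : dist p q = C) :
    cos (∠ q p s) = (B ^ 2 + C ^ 2 - A ^ 2) / (2 * B * C) := by
  have h := law_cos q p s
  rw [dist_comm q p, dist_comm s p, hpq, hps, hqs] at h
  field_simp
  linarith

lemma not_collinear_of_dist_lt {p q s : P} (hqs : dist q s < dist p s + dist p q)
    (hps : dist p s < dist q s + dist p q) (hpq : dist p q < dist q s + dist p s) :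
    ¬ Collinear ℝ ({p, q, s} : Set P) := by
  intro h
  rcases h.wbtw_or_wbtw_or_wbtw with h | h | h <;> have := h.dist_add_dist <;>
    linarith [dist_comm p q, dist_comm p s, dist_comm q s]

theorem angle_lt_sAngle {r A B C : ℝ} (hr : 0 < r) (hB : 0 < B) (hC : 0 < C)
    (hABC : A < B + C) (hBCA : B < A + C) (hCAB : C < A + B) (hBr : B < π * r)
    (hCr : C < π * r) {a b c : E3} {p q s : P} (ha : ‖a‖ = r) (hb : ‖b‖ = r) (hc : ‖c‖ = r)
    (hbc : sdist r b c = A) (hac : sdist r a c = B) (hab : sdist r a b = C)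
    (hqs : dist q s = A) (hps : dist p s = B) (hpq : dist p q = C) :
    ∠ q p s < sAngle b a c := by
  have iab : ⟪a, b⟫ = r ^ 2 * cos (C / r) := hab ▸ real_inner_eq_sq_mul_cos_sdist_div hr ha hb
  have iac : ⟪a, c⟫ = r ^ 2 * cos (B / r) := hac ▸ real_inner_eq_sq_mul_cos_sdist_div hr ha hc
  have ibc : ⟪b, c⟫ = r ^ 2 * cos (A / r) := hbc ▸ real_inner_eq_sq_mul_cos_sdist_div hr hb hc
  have hβ : 0 < B / r := div_pos hB hr
  have hγ : 0 < C / r := div_pos hC hr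
  have hβπ : B / r < π := (div_lt_iff₀ hr).2 hBr
  have hγπ : C / r < π := (div_lt_iff₀ hr).2 hCr
  have hcos_sph := cos_sAngle hr ha hb hc (sin_pos_of_pos_of_lt_pi hβ hβπ)
    (sin_pos_of_pos_of_lt_pi hγ hγπ) iab iac ibc
  have hcos_plane : cos (∠ q p s)
      = ((B / r) ^ 2 + (C / r) ^ 2 - (A / r) ^ 2) / (2 * (B / r) * (C / r)) := by
    rw [cos_angle_eq_of_dist hB.ne' hC.ne' hqs hps hpq]
    field_simp
  have hcos : cos (sAngle b a c) < cos (∠ q p s) := by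
    rw [hcos_sph, hcos_plane]
    refine cos_sub_cos_mul_cos_div_lt hβ hγ hβπ hγπ ?_ ?_ ?_ <;>
      rw [← add_div] <;> gcongr
  exact (strictAntiOn_cos.lt_iff_gt ⟨angle_nonneg _ _, angle_le_pi _ _⟩
    ⟨angle_nonneg _ _ _, angle_le_pi _ _ _⟩).1 hcos

end EuclideanGeometry

lemma EuclideanSpace.linearIndependent_toLp_of_det_ne_zero {n : ℕ}
    {M : Matrix (Fin n) (Fin n) ℝ} (hM : M.det ≠ 0) :
    LinearIndependent ℝ fun i => WithLp.toLp 2 (M i) := by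
  convert (Matrix.linearIndependent_rows_of_det_ne_zero hM).map'
    (WithLp.linearEquiv 2 ℝ (Fin n → ℝ)).symm.toLinearMap (LinearEquiv.ker _) using 1 <;> rfl

lemma sphTriangle_of_linearIndependent {r : ℝ} {a b c : E3} (ha : ‖a‖ = r) (hb : ‖b‖ = r)
    (hc : ‖c‖ = r) (h : LinearIndependent ℝ ![a, b, c]) : SphTriangle r a b c := by
  have hcomb (g : Fin 3 → ℝ) (hg : g 0 • a + g 1 • b + g 2 • c = 0) : g = 0 :=
    funext (Fintype.linearIndependent_iff.1 h g (by simpa [Fin.sum_univ_three] using hg))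
  refine ⟨ha, hb, hc, ?_, ?_, ?_, ?_, ?_, ?_, h⟩ <;> intro heq
  · simpa using congrFun (hcomb ![1, -1, 0] (by simp [heq])) 0
  · simpa using congrFun (hcomb ![1, 0, -1] (by simp [heq])) 0
  · simpa using congrFun (hcomb ![0, 1, -1] (by simp [heq])) 1
  · simpa using congrFun (hcomb ![1, 1, 0] (by simp [heq])) 0
  · simpa using congrFun (hcomb ![1, 0, 1] (by simp [heq])) 0
  · simpa using congrFun (hcomb ![0, 1, 1] (by simp [heq])) 1

lemma exists_linearIndependent_of_sides_angle {r β γ t : ℝ} (hr : 0 < r) (hβ : 0 < sin β)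
    (hγ : 0 < sin γ) (ht : 0 < sin t) :
    ∃ a b c : E3, LinearIndependent ℝ ![a, b, c] ∧ ‖a‖ = r ∧ ‖b‖ = r ∧ ‖c‖ = r ∧
      ⟪a, b⟫ = r ^ 2 * cos γ ∧ ⟪a, c⟫ = r ^ 2 * cos β ∧
      ⟪b, c⟫ = r ^ 2 * (cos β * cos γ + sin β * sin γ * cos t) := by
  let M : Matrix (Fin 3) (Fin 3) ℝ := !![r, 0, 0; r * cos γ, r * sin γ, 0;
    r * cos β, r * sin β * cos t, r * sin β * sin t]
  have hM : M.det ≠ 0 := by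
    rw [show M.det = r * (r * sin γ) * (r * sin β * sin t) by simp [M, Matrix.det_fin_three]]
    positivity
  have hinner (i j : Fin 3) :
      ⟪WithLp.toLp 2 (M i), WithLp.toLp 2 (M j)⟫ = ∑ k, M i k * M j k := by
    simp [PiLp.inner_apply, mul_comm]
  refine ⟨WithLp.toLp 2 (M 0), WithLp.toLp 2 (M 1), WithLp.toLp 2 (M 2), ?_,
    norm_eq_of_real_inner_self_eq hr.le ?_, norm_eq_of_real_inner_self_eq hr.le ?_,
    norm_eq_of_real_inner_self_eq hr.le ?_, ?_, ?_, ?_⟩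
  · convert EuclideanSpace.linearIndependent_toLp_of_det_ne_zero hM using 1
    funext i
    fin_cases i <;> rfl
  all_goals simp only [hinner, Fin.sum_univ_three, M, Matrix.of_apply, Matrix.cons_val',
    Matrix.cons_val_fin_one, Matrix.cons_val_zero, Matrix.cons_val_one, Matrix.cons_val]
  · ring
  · linear_combination r ^ 2 * sin_sq_add_cos_sq γ
  · linear_combination r ^ 2 * sin_sq_add_cos_sq β + r ^ 2 * sin β ^ 2 * sin_sq_add_cos_sq t
  all_goals ring

lemma exists_sphTriangle_sdist_eq {r A B C : ℝ} (hr : 0 < r) (hA : 0 < A) (hB : 0 < B)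
    (hC : 0 < C) (hABC : A < B + C) (hBCA : B < A + C) (hCAB : C < A + B) (hAr : A < π * r)
    (hBr : B < π * r) (hCr : C < π * r) (hsum : A + B + C < 2 * π * r) :
    ∃ a b c : E3, SphTriangle r a b c ∧ sdist r b c = A ∧ sdist r a c = B ∧ sdist r a b = C := by
  obtain ⟨α, β, γ, hα_def, hβ_def, hγ_def⟩ : ∃ α β γ, α = A / r ∧ β = B / r ∧ γ = C / r :=
    ⟨_, _, _, rfl, rfl, rfl⟩
  have hα : 0 < α := hα_def ▸ div_pos hA hr
  have hβ : 0 < β := hβ_def ▸ div_pos hB hr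
  have hγ : 0 < γ := hγ_def ▸ div_pos hC hr
  have hαπ : α < π := hα_def ▸ (div_lt_iff₀ hr).2 hAr
  have hβπ : β < π := hβ_def ▸ (div_lt_iff₀ hr).2 hBr
  have hγπ : γ < π := hγ_def ▸ (div_lt_iff₀ hr).2 hCr
  have hαβγ : α < β + γ := by rw [hα_def, hβ_def, hγ_def, ← add_div]; gcongr
  have hβαγ : β < α + γ := by rw [hα_def, hβ_def, hγ_def, ← add_div]; gcongr
  have hγαβ : γ < α + β := by rw [hα_def, hβ_def, hγ_def, ← add_div]; gcongr
  have hsum' : α + β + γ < 2 * π := by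
    rw [hα_def, hβ_def, hγ_def, ← add_div, ← add_div, div_lt_iff₀ hr]; exact hsum
  have hsβ : 0 < sin β := sin_pos_of_pos_of_lt_pi hβ hβπ
  have hsγ : 0 < sin γ := sin_pos_of_pos_of_lt_pi hγ hγπ
  set X := (cos α - cos β * cos γ) / (sin β * sin γ) with hX_def
  have hX_gt : -1 < X := neg_one_lt_cos_sub_cos_mul_cos_div hα hβ hγ hβπ hγπ hαβγ hsum'
  have hX_lt : X < 1 := by
    refine (cos_sub_cos_mul_cos_div_lt hβ hγ hβπ hγπ hαβγ hβαγ hγαβ).trans ?_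
    rw [div_lt_one (by positivity)]
    exact (abs_lt.1 (abs_sq_add_sq_sub_sq_lt hα hβ hγ hαβγ hβαγ hγαβ)).2
  have hsin : 0 < sin (arccos X) := by
    rw [sin_arccos]
    exact sqrt_pos.2 (by nlinarith)
  obtain ⟨a, b, c, hind, ha, hb, hc, hab, hac, hbc⟩ :=
    exists_linearIndependent_of_sides_angle hr hsβ hsγ hsin
  rw [cos_arccos hX_gt.le hX_lt.le, hX_def, mul_div_cancel₀ _ (by positivity),
    add_sub_cancel] at hbc
  refine ⟨a, b, c, sphTriangle_of_linearIndependent ha hb hc hind, ?_, ?_, ?_⟩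
  · rw [sdist_eq_of_real_inner_eq hr.ne' hbc hα.le hαπ.le, hα_def, mul_div_cancel₀ _ hr.ne']
  · rw [sdist_eq_of_real_inner_eq hr.ne' hac hβ.le hβπ.le, hβ_def, mul_div_cancel₀ _ hr.ne']
  · rw [sdist_eq_of_real_inner_eq hr.ne' hab hγ.le hγπ.le, hγ_def, mul_div_cancel₀ _ hr.ne']

lemma exists_triangle_dist_eq {A B C : ℝ} (hA : 0 < A) (hB : 0 < B) (hC : 0 < C)
    (hABC : A < B + C) (hBCA : B < A + C) (hCAB : C < A + B) :
    ∃ p q s : E2, ¬ Collinear ℝ ({p, q, s} : Set E2) ∧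
      dist q s = A ∧ dist p s = B ∧ dist p q = C := by
  have hdist (x₁ y₁ x₂ y₂ : ℝ) :
      dist (!₂[x₁, y₁] : E2) !₂[x₂, y₂] = √((x₁ - x₂) ^ 2 + (y₁ - y₂) ^ 2) := by
    simp [EuclideanSpace.dist_eq, Fin.sum_univ_two, Real.dist_eq, sq_abs]
  obtain ⟨x, hx⟩ : ∃ x, 2 * C * x = B ^ 2 + C ^ 2 - A ^ 2 :=
    ⟨(B ^ 2 + C ^ 2 - A ^ 2) / (2 * C), by field_simp⟩
  have hxB : x ^ 2 < B ^ 2 := by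
    have h2C : 0 < 2 * C := by positivity
    have h := abs_sq_add_sq_sub_sq_lt hA hB hC hABC hBCA hCAB
    rw [← hx, abs_mul, abs_of_pos h2C] at h
    rw [sq_lt_sq, abs_of_pos hB]
    exact lt_of_mul_lt_mul_left (by linarith) h2C.le
  obtain ⟨y, hy⟩ : ∃ y, y ^ 2 = B ^ 2 - x ^ 2 := ⟨_, sq_sqrt (by linarith)⟩
  have hqs : dist (!₂[C, 0] : E2) !₂[x, y] = A := by
    rw [hdist, sqrt_eq_iff_mul_self_eq_of_pos hA]
    linear_combination hx - hy
  have hps : dist (!₂[0, 0] : E2) !₂[x, y] = B := by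
    rw [hdist, sqrt_eq_iff_mul_self_eq_of_pos hB]
    linear_combination -hy
  have hpq : dist (!₂[0, 0] : E2) !₂[C, 0] = C := by
    rw [hdist, sqrt_eq_iff_mul_self_eq_of_pos hC]
    ring
  refine ⟨_, _, _, not_collinear_of_dist_lt ?_ ?_ ?_, hqs, hps, hpq⟩ <;>
    rw [hqs, hps, hpq] <;> assumption

open Real in
/-- **Lemma 3**: spherical angles exceed planar angles.  Let `A, B, C > 0` satisfy the
strict triangle inequality, each be less than `π r`, and `A + B + C < 2 π r`; then there
exist both a geodesic triangle on the sphere `S_r` and a planar triangle with side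
lengths `A, B, C`, and each angle of any such spherical triangle is strictly greater
than the angle of any such planar triangle opposite the side of the same length.
(Equivalently: drawing a planar triangle on a sphere with the same side lengths strictly
increases all three angles, and drawing a spherical triangle in the plane strictly
decreases them.) -/
theorem spherical_angles_gt_planar_angles (r A B C : ℝ) (hr : 0 < r)
    (hA : 0 < A) (hB : 0 < B) (hC : 0 < C)
    (hABC : A < B + C) (hBCA : B < A + C) (hCAB : C < A + B)
    (hAr : A < π * r) (hBr : B < π * r) (hCr : C < π * r)
    (hsum : A + B + C < 2 * π * r) :
    (∃ a b c : E3, SphTriangle r a b c ∧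
      sdist r b c = A ∧ sdist r a c = B ∧ sdist r a b = C) ∧
    (∃ p q s : E2, ¬ Collinear ℝ ({p, q, s} : Set E2) ∧
      dist q s = A ∧ dist p s = B ∧ dist p q = C) ∧
    (∀ (a b c : E3) (p q s : E2),
      SphTriangle r a b c →
      sdist r b c = A → sdist r a c = B → sdist r a b = C →
      dist q s = A → dist p s = B → dist p q = C →
      sAngle b a c > EuclideanGeometry.angle q p s ∧
      sAngle a b c > EuclideanGeometry.angle p q s ∧
      sAngle a c b > EuclideanGeometry.angle p s q) := by
  refine ⟨exists_sphTriangle_sdist_eq hr hA hB hC hABC hBCA hCAB hAr hBr hCr hsum,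
    exists_triangle_dist_eq hA hB hC hABC hBCA hCAB, ?_⟩
  rintro a b c p q s ⟨ha, hb, hc, -⟩ hbc hac hab hqs hps hpq
  have hba : sdist r b a = C := sdist_comm r b a ▸ hab
  have hca : sdist r c a = B := sdist_comm r c a ▸ hac
  have hcb : sdist r c b = A := sdist_comm r c b ▸ hbc
  exact ⟨angle_lt_sAngle hr hB hC hABC hBCA hCAB hBr hCr ha hb hc hbc hac hab hqs hps hpq,
    angle_lt_sAngle hr hA hC hBCA hABC (by linarith) hAr hCr hb ha hc hac hbc hba hps hqs
      (dist_comm q p ▸ hpq),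
    angle_lt_sAngle hr hA hB hCAB (by linarith) (by linarith) hAr hBr hc ha hb hab hcb hca hpq
      (dist_comm s q ▸ hqs) (dist_comm s p ▸ hps)⟩
end
end

section
/- Let T be a triangle in the Euclidean plane with side lengths A, B, C (positive reals satisfying the strict triangle inequality), and let T′ be a geodesic triangle in the hyperbolic plane (the upper half-plane with its Poincaré metric of constant curvature −1) with the same side lengths A, B, C. Then each angle of T′ is strictly smaller than the angle of T opposite the side of the same length. -/
noncomputable section

/-- The hyperbolic angle of a geodesic triangle in the upper half-plane (with its
Poincaré metric of constant curvature `−1`, which is the distance carried by Mathlib's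
`MetricSpace UpperHalfPlane` instance) at the vertex `z`, between the geodesic sides
from `z` to `w` and from `z` to `u`.  It is computed from the side lengths by the
hyperbolic law of cosines, which agrees with the angle between the initial tangent
vectors of the two sides at `z`. -/
def hypAngle (z w u : UpperHalfPlane) : ℝ :=
  Real.arccos ((Real.cosh (dist z w) * Real.cosh (dist z u) - Real.cosh (dist w u)) /
    (Real.sinh (dist z w) * Real.sinh (dist z u)))

/-- A geodesic triangle in the hyperbolic plane: three points, pairwise distinct and not
all on a common geodesic; in the hyperbolic plane this is equivalent to the three
pairwise distances satisfying the strict triangle inequality. -/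
def HypTriangle (z w u : UpperHalfPlane) : Prop :=
  dist w u < dist z w + dist z u ∧
  dist z u < dist z w + dist w u ∧
  dist z w < dist z u + dist w u

/-!
Write `d = |b - c|` and `s = b + c`. Both laws of cosines compare the third side `a` with the
extremes `d < a < s`: the Euclidean cosine is `1 - 2 (a² - d²) / (s² - d²)` and the hyperbolic
one is `1 - 2 (F a² - F d²) / (F s² - F d²)` for `F t = cosh √t`. Since `F` is strictly convex,
`F a²` lies strictly below the chord of `F` over `[d², s²]`, so the hyperbolic cosine is strictly
larger and the hyperbolic angle strictly smaller.
-/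

open Real Set

namespace Real

lemma strictConvexOn_sinh : StrictConvexOn ℝ (Ici 0) sinh :=
  StrictMonoOn.strictConvexOn_of_deriv (convex_Ici 0) continuous_sinh.continuousOn <| by
    simpa only [deriv_sinh, interior_Ici] using cosh_strictMonoOn.mono Ioi_subset_Ici_self

lemma strictMonoOn_sinh_div_self : StrictMonoOn (fun x => sinh x / x) (Ioi 0) :=
  fun x hx y hy hxy => by
    simpa using strictConvexOn_sinh.secant_strict_mono self_mem_Ici (mem_Ici.2 hx.le)
      (mem_Ici.2 hy.le) hx.ne' hy.ne' hxy

lemma hasDerivAt_cosh_sqrt {t : ℝ} (ht : 0 < t) :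
    HasDerivAt (fun t => cosh √t) (sinh √t / √t / 2) t :=
  ((hasDerivAt_cosh √t).comp t (hasDerivAt_sqrt ht.ne')).congr_deriv (by ring)

lemma strictConvexOn_cosh_sqrt : StrictConvexOn ℝ (Ici 0) (fun t => cosh √t) := by
  refine StrictMonoOn.strictConvexOn_of_deriv (convex_Ici 0) (by fun_prop) ?_
  rw [interior_Ici]
  intro x hx y hy hxy
  rw [(hasDerivAt_cosh_sqrt hx).deriv, (hasDerivAt_cosh_sqrt hy).deriv]
  have := strictMonoOn_sinh_div_self (sqrt_pos.2 hx) (sqrt_pos.2 hy) (sqrt_lt_sqrt hx.le hxy)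
  dsimp only at this
  linarith

lemma arccos_lt_of_cos_lt {x θ : ℝ} (h₀ : 0 ≤ θ) (hπ : θ ≤ π) (hx : x ≤ 1) (h : cos θ < x) :
    arccos x < θ := by
  simpa [arccos_cos h₀ hπ] using arccos_lt_arccos (neg_one_le_cos θ) h hx

end Real

lemma pos_of_abs_sub_lt_of_lt_add {a b c : ℝ} (h : |b - c| < a) (h' : a < b + c) :
    0 < b ∧ 0 < c := by
  obtain ⟨hbc, hcb⟩ := abs_sub_lt_iff.1 h
  constructor <;> linarith

lemma euclidean_cos_lt_hyperbolic_cos {a b c : ℝ} (h : |b - c| < a) (h' : a < b + c) :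
    (b ^ 2 + c ^ 2 - a ^ 2) / (2 * b * c)
      < (cosh b * cosh c - cosh a) / (sinh b * sinh c) := by
  obtain ⟨hb, hc⟩ := pos_of_abs_sub_lt_of_lt_add h h'
  have hd : (b - c) ^ 2 < a ^ 2 := by
    simpa only [sq_abs] using pow_lt_pow_left₀ h (abs_nonneg _) two_ne_zero
  have hs : a ^ 2 < (b + c) ^ 2 := pow_lt_pow_left₀ h' ((abs_nonneg _).trans h.le) two_ne_zero
  have chord := strictConvexOn_cosh_sqrt.secant_strict_mono (mem_Ici.2 (sq_nonneg (b - c)))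
    (mem_Ici.2 (sq_nonneg a)) (mem_Ici.2 (sq_nonneg (b + c))) hd.ne' (hd.trans hs).ne' hs
  simp only [sqrt_sq_eq_abs, cosh_abs, cosh_add, cosh_sub] at chord
  have hS : 0 < sinh b * sinh c := mul_pos (sinh_pos_iff.2 hb) (sinh_pos_iff.2 hc)
  rw [div_lt_div_iff₀ (by linarith) (by nlinarith)] at chord
  rw [div_lt_div_iff₀ (by positivity) hS]
  linarith

lemma hyperbolic_cos_le_one {a b c : ℝ} (hb : 0 < b) (hc : 0 < c) (h : |b - c| ≤ a) :
    (cosh b * cosh c - cosh a) / (sinh b * sinh c) ≤ 1 := by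
  have : cosh (b - c) ≤ cosh a := cosh_le_cosh.2 (h.trans (le_abs_self a))
  rw [div_le_one (mul_pos (sinh_pos_iff.2 hb) (sinh_pos_iff.2 hc))]
  linarith [cosh_sub b c]

namespace EuclideanGeometry

theorem arccos_hyperbolic_cos_lt_angle {V P : Type*}
    [NormedAddCommGroup V] [InnerProductSpace ℝ V] [MetricSpace P] [NormedAddTorsor V P]
    {p₁ p₂ p₃ : P} {a b c : ℝ} (ha : dist p₁ p₃ = a) (hb : dist p₂ p₁ = b)
    (hc : dist p₂ p₃ = c) (h : |b - c| < a) (h' : a < b + c) :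
    arccos ((cosh b * cosh c - cosh a) / (sinh b * sinh c)) < ∠ p₁ p₂ p₃ := by
  obtain ⟨hb₀, hc₀⟩ := pos_of_abs_sub_lt_of_lt_add h h'
  have hcos : cos (∠ p₁ p₂ p₃) = (b ^ 2 + c ^ 2 - a ^ 2) / (2 * b * c) := by
    have := law_cos p₁ p₂ p₃
    rw [ha, dist_comm p₁ p₂, dist_comm p₃ p₂, hb, hc] at this
    field_simp
    linarith
  exact arccos_lt_of_cos_lt (angle_nonneg _ _ _) (angle_le_pi _ _ _)
    (hyperbolic_cos_le_one hb₀ hc₀ h.le) (hcos ▸ euclidean_cos_lt_hyperbolic_cos h h')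

end EuclideanGeometry

theorem hyperbolic_angles_lt_planar_angles_general (A B C : ℝ)
    (hABC : A < B + C) (hBCA : B < A + C) (hCAB : C < A + B)
    (p q s : E2) (hA₁ : dist q s = A) (hB₁ : dist p s = B) (hC₁ : dist p q = C)
    (z w u : UpperHalfPlane)
    (hA₂ : dist w u = A) (hB₂ : dist z u = B) (hC₂ : dist z w = C) :
    hypAngle z w u < EuclideanGeometry.angle q p s ∧
    hypAngle w z u < EuclideanGeometry.angle p q s ∧
    hypAngle u z w < EuclideanGeometry.angle p s q := by
  refine ⟨?_, ?_, ?_⟩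
  · rw [hypAngle, hC₂, hB₂, hA₂]
    exact EuclideanGeometry.arccos_hyperbolic_cos_lt_angle hA₁ hC₁ hB₁
      (abs_sub_lt_iff.2 ⟨by linarith, by linarith⟩) (by linarith)
  · rw [hypAngle, dist_comm w z, hC₂, hA₂, hB₂]
    exact EuclideanGeometry.arccos_hyperbolic_cos_lt_angle hB₁ (by rw [dist_comm, hC₁]) hA₁
      (abs_sub_lt_iff.2 ⟨by linarith, by linarith⟩) (by linarith)
  · rw [hypAngle, dist_comm u z, dist_comm u w, hB₂, hA₂, hC₂]
    exact EuclideanGeometry.arccos_hyperbolic_cos_lt_angle hC₁ (by rw [dist_comm, hB₁])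
      (by rw [dist_comm, hA₁]) (abs_sub_lt_iff.2 ⟨by linarith, by linarith⟩) (by linarith)

/-- **Corollary 7 with curvatures `κ = 0`, `κ' = −1`** (via Toponogov's Comparison
Theorem): redrawing a planar triangle with the same side lengths in the hyperbolic plane
strictly decreases every angle.  Here `T = △pqs` is a Euclidean planar triangle with
side lengths `A = |qs|`, `B = |ps|`, `C = |pq|` satisfying the strict triangle
inequality, and `T' = △zwu` is a geodesic triangle in the upper half-plane with the same
side lengths; corresponding angles are opposite sides of the same length. -/
theorem hyperbolic_angles_lt_planar_angles (A B C : ℝ)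
    (hA : 0 < A) (hB : 0 < B) (hC : 0 < C)
    (hABC : A < B + C) (hBCA : B < A + C) (hCAB : C < A + B)
    (p q s : E2) (hA₁ : dist q s = A) (hB₁ : dist p s = B) (hC₁ : dist p q = C)
    (z w u : UpperHalfPlane) (htri : HypTriangle z w u)
    (hA₂ : dist w u = A) (hB₂ : dist z u = B) (hC₂ : dist z w = C) :
    hypAngle z w u < EuclideanGeometry.angle q p s ∧
    hypAngle w z u < EuclideanGeometry.angle p q s ∧
    hypAngle u z w < EuclideanGeometry.angle p s q :=
  hyperbolic_angles_lt_planar_angles_general A B C hABC hBCA hCAB p q s hA₁ hB₁ hC₁ z w u hA₂ hB₂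
    hC₂
end
end
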